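/- For all 1 ≤ i, j ≤ n and all m, p ∈ ℤ, the intermediate Wakimoto operators satisfy relation (R3): [ρ(H_i)_m, ρ(F_j)_p] = −(α_i|α_j) · ρ(F_j)_{m+p}, where (α_i|α_j) = (A_n)_{ij}. -/
import Mathlib


open MvPolynomial

/-- The Cartan matrix of `sl(n+1, ℂ)` in 1-based indices. -/
noncomputable def cartanEntry (i j : ℕ) : ℂ :=
  if i = j then 2 else if i + 1 = j ∨ j + 1 = i then -1 else 0

/-- The entries of the matrix `𝔅` (1-based indices). -/
noncomputable def Bentry (r : ℕ) (γ : ℂ) (i j : ℕ) : ℂ :=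
  cartanEntry i j *
    (γ ^ 2 - (if r < i then 1 else 0) * (if r < j then 1 else 0) * ((r : ℂ) + 1)
      + ((r : ℂ) / 2) * (if i = r + 1 then 1 else 0) * (if j = r + 1 then 1 else 0))

/-- Index set for the variables `x_{ij,m}`, `1 ≤ i ≤ j ≤ n`, `m ∈ ℤ`. -/
abbrev XIdx (n : ℕ) : Type := {v : ℕ × ℕ // 1 ≤ v.1 ∧ v.1 ≤ v.2 ∧ v.2 ≤ n} × ℤ

/-- Index set for the variables `y_{k,m}`, `1 ≤ k ≤ n` (encoded by `Fin n`,
`k ↦ k + 1`) and `m ≥ 1`. -/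
abbrev YIdx (n : ℕ) : Type := Fin n × {m : ℕ // 1 ≤ m}

/-- The Fock space `F = ℂ[x_{ij,m}; y_{k,m}]`. -/
abbrev FSp (n : ℕ) : Type := MvPolynomial (XIdx n ⊕ YIdx n) ℂ

/-- The operator `a_{ij,m}`: it is `∂/∂x_{ij,m}` if `m ≥ 0` and `j ≤ r`, and
multiplication by `x_{ij,m}` otherwise (and junk `0` for invalid indices `i, j`,
which are never used).  Applied to any fixed polynomial, all the `∑ᶠ` sums
appearing below have finite support, so they compute the intended operators. -/
noncomputable def aop (n r i j : ℕ) (m : ℤ) : FSp n → FSp n :=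
  if h : 1 ≤ i ∧ i ≤ j ∧ j ≤ n then
    (if 0 ≤ m ∧ j ≤ r then fun q => pderiv (Sum.inl (⟨(i, j), h⟩, m)) q
     else fun q => X (Sum.inl (⟨(i, j), h⟩, m)) * q)
  else 0

/-- The operator `a*_{ij,m}`: multiplication by `x_{ij,−m}` if `m ≤ 0` and `j ≤ r`,
and `−∂/∂x_{ij,−m}` otherwise. -/
noncomputable def astarop (n r i j : ℕ) (m : ℤ) : FSp n → FSp n :=
  if h : 1 ≤ i ∧ i ≤ j ∧ j ≤ n then
    (if m ≤ 0 ∧ j ≤ r then fun q => X (Sum.inl (⟨(i, j), h⟩, -m)) * q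
     else fun q => -pderiv (Sum.inl (⟨(i, j), h⟩, -m)) q)
  else 0

/-- The polynomial `e_i·𝐲_m = Σ_{k=1}^n (e_i)_k y_{k,m}`. -/
noncomputable def yPoly (n : ℕ) (e : ℕ → ℕ → ℂ) (i : ℕ) (m : {m : ℕ // 1 ≤ m}) :
    FSp n :=
  ∑ k : Fin n, e i (k.1 + 1) • X (Sum.inr (k, m))

/-- The operator `b_{i,m}`:  `b_{i,0} = λ_i · id`; for `m > 0`, `b_{i,−m}` is
multiplication by `e_i·𝐲_m` and `b_{i,m} = m Σ_k (e_i)_k ∂/∂y_{k,m}`. -/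
noncomputable def bop (n : ℕ) (e : ℕ → ℕ → ℂ) (lam : ℕ → ℂ) (i : ℕ) (m : ℤ) :
    FSp n → FSp n :=
  if h : 0 < m then
    fun q => (m : ℂ) • ∑ k : Fin n,
      e i (k.1 + 1) • pderiv (Sum.inr (k, ⟨m.toNat, by omega⟩)) q
  else if h' : m = 0 then fun q => lam i • q
  else fun q => yPoly n e i ⟨(-m).toNat, by omega⟩ * q

/-- The normally ordered pair `:a_{ij,u} a*_{kl,v}:` : the annihilation operator
(`a_{ij,u}` with `u ≥ 0`, `j ≤ r`) is moved to the right of the creation operator. -/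
noncomputable def nAA (n r i j k l : ℕ) (u v : ℤ) : FSp n → FSp n :=
  if 0 ≤ u ∧ j ≤ r then fun q => astarop n r k l v (aop n r i j u q)
  else fun q => aop n r i j u (astarop n r k l v q)

/-- Mode `m` (coefficient of `z^{−m−1}`) of the normally ordered product
`:a_{ij}(z) a*_{kl}(z):`. -/
noncomputable def nAAmode (n r i j k l : ℕ) (m : ℤ) : FSp n → FSp n :=
  fun q => ∑ᶠ s : ℤ, nAA n r i j k l s (m - s) q

/-- Normal ordering of the mode `a*_{ij,s}` against an operator `B`: an
annihilating `a*_{ij,s}` (i.e. `s > 0` and `j ≤ r`, or `j > r`) is moved to the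
right of `B`. -/
noncomputable def nStar (n r i j : ℕ) (s : ℤ) (B : FSp n → FSp n) : FSp n → FSp n :=
  if (j ≤ r ∧ 0 < s) ∨ r < j then fun q => B (astarop n r i j s q)
  else fun q => astarop n r i j s (B q)

/-- The intermediate Wakimoto mode operator `ρ(H_i)_m`. -/
noncomputable def rhoH (n r : ℕ) (e : ℕ → ℕ → ℂ) (lam : ℕ → ℂ) (i : ℕ) (m : ℤ) :
    FSp n → FSp n :=
  fun q => (2 : ℂ) • nAAmode n r i i i i m q
    + ∑ j ∈ Finset.Ico 1 i,
        (nAAmode n r j i j i m q - nAAmode n r j (i - 1) j (i - 1) m q)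
    + ∑ j ∈ Finset.Icc (i + 1) n,
        (nAAmode n r i j i j m q - nAAmode n r (i + 1) j (i + 1) j m q)
    + bop n e lam i m q

/-- The intermediate Wakimoto mode operator `ρ(F_i)_m`. -/
noncomputable def rhoF (n r i : ℕ) (m : ℤ) : FSp n → FSp n :=
  fun q => aop n r i i m q
    + ∑ j ∈ Finset.Icc (i + 1) n,
        ∑ᶠ s : ℤ, aop n r i j s (astarop n r (i + 1) j (m - s) q)

/-- The intermediate Wakimoto mode operator `ρ(E_i)_m`. -/
noncomputable def rhoE (n r : ℕ) (γ : ℂ) (e : ℕ → ℕ → ℂ) (lam : ℕ → ℂ) (i : ℕ)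
    (m : ℤ) : FSp n → FSp n :=
  fun q =>
    (∑ᶠ s : ℤ, nStar n r i i s
        ((∑ k ∈ Finset.Ico 1 i, nAAmode n r k (i - 1) k (i - 1) (m - s))
          - ∑ k ∈ Finset.Icc 1 i, nAAmode n r k i k i (m - s)) q)
    + ∑ k ∈ Finset.Icc (i + 1) n,
        ∑ᶠ s : ℤ, aop n r (i + 1) k s (astarop n r i k (m - s) q)
    - ∑ k ∈ Finset.Ico 1 i,
        ∑ᶠ s : ℤ, aop n r k (i - 1) s (astarop n r k i (m - s) q)
    - ∑ᶠ s : ℤ, astarop n r i i s (bop n e lam i (m - s) q)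
    - ((if r < i then (r : ℂ) + 1 else (i : ℂ) + 1) - γ ^ 2) •
        ((-(m : ℂ)) • astarop n r i i m q)

/-- Commutator of two operators. -/
noncomputable def opComm (n : ℕ) (A B : FSp n → FSp n) : FSp n → FSp n :=
  fun q => A (B q) - B (A q)

section Basic

variable {n r : ℕ}

lemma pderiv_comm' {σ : Type*} [DecidableEq σ] (a b : σ) (q : MvPolynomial σ ℂ) :
    pderiv a (pderiv b q) = pderiv b (pderiv a q) := by
  induction q using MvPolynomial.induction_on with
  | C c => simp
  | add f g hf hg => simp [map_add, hf, hg]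
  | mul_X f k hf =>
    simp only [pderiv_mul, map_add, hf]
    rcases eq_or_ne k a with rfl | ha <;> rcases eq_or_ne k b with rfl | hb <;>
      simp [pderiv_X_self, pderiv_X_of_ne, *] <;> ring

lemma aop_zero (i j : ℕ) (u : ℤ) : aop n r i j u 0 = 0 := by
  unfold aop; split_ifs <;> simp

lemma astar_zero (i j : ℕ) (u : ℤ) : astarop n r i j u 0 = 0 := by
  unfold astarop; split_ifs <;> simp

lemma aop_add (i j : ℕ) (u : ℤ) (q₁ q₂ : FSp n) :
    aop n r i j u (q₁ + q₂) = aop n r i j u q₁ + aop n r i j u q₂ := by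
  unfold aop; split_ifs <;> simp [mul_add]

lemma astar_add (i j : ℕ) (u : ℤ) (q₁ q₂ : FSp n) :
    astarop n r i j u (q₁ + q₂) = astarop n r i j u q₁ + astarop n r i j u q₂ := by
  unfold astarop; split_ifs <;> simp [mul_add] <;> abel

lemma aop_smul (i j : ℕ) (u : ℤ) (c : ℂ) (q : FSp n) :
    aop n r i j u (c • q) = c • aop n r i j u q := by
  unfold aop; split_ifs <;> simp [mul_smul_comm]

lemma astar_smul (i j : ℕ) (u : ℤ) (c : ℂ) (q : FSp n) :
    astarop n r i j u (c • q) = c • astarop n r i j u q := by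
  unfold astarop; split_ifs <;> simp [mul_smul_comm]

/-- `aop` bundled as an additive monoid hom. -/
noncomputable def aopA (n r i j : ℕ) (u : ℤ) : FSp n →+ FSp n :=
  AddMonoidHom.mk' (aop n r i j u) (aop_add i j u)

/-- `astarop` bundled as an additive monoid hom. -/
noncomputable def astarA (n r i j : ℕ) (u : ℤ) : FSp n →+ FSp n :=
  AddMonoidHom.mk' (astarop n r i j u) (astar_add i j u)

@[simp] lemma aopA_apply (i j : ℕ) (u : ℤ) (q : FSp n) :
    aopA n r i j u q = aop n r i j u q := rfl

@[simp] lemma astarA_apply (i j : ℕ) (u : ℤ) (q : FSp n) :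
    astarA n r i j u q = astarop n r i j u q := rfl

end Basic
section Comm

variable {n r : ℕ}

lemma pderiv_X_mul {σ : Type*} [DecidableEq σ] {a b : σ} (h : b ≠ a)
    (q : MvPolynomial σ ℂ) : pderiv a (X b * q) = X b * pderiv a q := by
  rw [pderiv_mul, pderiv_X_of_ne h, zero_mul, zero_add]

lemma aop_aop (i j k l : ℕ) (u v : ℤ) (q : FSp n) :
    aop n r i j u (aop n r k l v q) = aop n r k l v (aop n r i j u q) := by
  unfold aop
  by_cases h1 : 1 ≤ i ∧ i ≤ j ∧ j ≤ n
  · by_cases h2 : 1 ≤ k ∧ k ≤ l ∧ l ≤ n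
    · rw [dif_pos h1, dif_pos h2]
      by_cases c1 : 0 ≤ u ∧ j ≤ r <;> by_cases c2 : 0 ≤ v ∧ l ≤ r
      · rw [if_pos c1, if_pos c2]; exact pderiv_comm' _ _ q
      · rw [if_pos c1, if_neg c2]
        have hne : (Sum.inl (⟨(k,l),h2⟩, v) : XIdx n ⊕ YIdx n) ≠
            Sum.inl (⟨(i,j),h1⟩, u) := by
          intro hh
          simp only [Sum.inl.injEq, Prod.mk.injEq, Subtype.mk.injEq] at hh
          obtain ⟨⟨rfl, rfl⟩, rfl⟩ := hh
          exact c2 c1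
        exact pderiv_X_mul hne q
      · rw [if_neg c1, if_pos c2]
        have hne : (Sum.inl (⟨(i,j),h1⟩, u) : XIdx n ⊕ YIdx n) ≠
            Sum.inl (⟨(k,l),h2⟩, v) := by
          intro hh
          simp only [Sum.inl.injEq, Prod.mk.injEq, Subtype.mk.injEq] at hh
          obtain ⟨⟨rfl, rfl⟩, rfl⟩ := hh
          exact c1 c2
        exact (pderiv_X_mul hne q).symm
      · rw [if_neg c1, if_neg c2]; ring
    · rw [dif_pos h1, dif_neg h2]; split_ifs <;> simp
  · rw [dif_neg h1]
    by_cases h2 : 1 ≤ k ∧ k ≤ l ∧ l ≤ n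
    · simp only [dif_pos h2, Pi.zero_apply]
      split_ifs <;> simp
    · rw [dif_neg h2]

lemma astar_astar (i j k l : ℕ) (u v : ℤ) (q : FSp n) :
    astarop n r i j u (astarop n r k l v q) =
      astarop n r k l v (astarop n r i j u q) := by
  unfold astarop
  by_cases h1 : 1 ≤ i ∧ i ≤ j ∧ j ≤ n
  · by_cases h2 : 1 ≤ k ∧ k ≤ l ∧ l ≤ n
    · rw [dif_pos h1, dif_pos h2]
      by_cases c1 : u ≤ 0 ∧ j ≤ r <;> by_cases c2 : v ≤ 0 ∧ l ≤ r
      · rw [if_pos c1, if_pos c2]; ring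
      · rw [if_pos c1, if_neg c2]
        have hne : (Sum.inl (⟨(i,j),h1⟩, -u) : XIdx n ⊕ YIdx n) ≠
            Sum.inl (⟨(k,l),h2⟩, -v) := by
          intro hh
          simp only [Sum.inl.injEq, Prod.mk.injEq, Subtype.mk.injEq] at hh
          obtain ⟨⟨rfl, rfl⟩, hv⟩ := hh
          exact c2 (by omega)
        rw [mul_neg, ← pderiv_X_mul hne q]
      · rw [if_neg c1, if_pos c2]
        have hne : (Sum.inl (⟨(k,l),h2⟩, -v) : XIdx n ⊕ YIdx n) ≠
            Sum.inl (⟨(i,j),h1⟩, -u) := by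
          intro hh
          simp only [Sum.inl.injEq, Prod.mk.injEq, Subtype.mk.injEq] at hh
          obtain ⟨⟨rfl, rfl⟩, hv⟩ := hh
          exact c1 (by omega)
        rw [mul_neg, ← pderiv_X_mul hne q]
      · rw [if_neg c1, if_neg c2]
        rw [map_neg, map_neg, neg_neg, neg_neg]; exact pderiv_comm' _ _ q
    · rw [dif_pos h1, dif_neg h2]; split_ifs <;> simp
  · rw [dif_neg h1]
    by_cases h2 : 1 ≤ k ∧ k ≤ l ∧ l ≤ n
    · simp only [dif_pos h2, Pi.zero_apply]
      split_ifs <;> simp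
    · rw [dif_neg h2]

lemma aop_astar {i j k l : ℕ} {u v : ℤ} (h1 : 1 ≤ i ∧ i ≤ j ∧ j ≤ n)
    (h2 : 1 ≤ k ∧ k ≤ l ∧ l ≤ n) (q : FSp n) :
    aop n r i j u (astarop n r k l v q) =
      astarop n r k l v (aop n r i j u q) +
        (if i = k ∧ j = l ∧ u + v = 0 then q else 0) := by
  have hvar : (Sum.inl (⟨(k,l),h2⟩, -v) : XIdx n ⊕ YIdx n) =
      Sum.inl (⟨(i,j),h1⟩, u) ↔ (i = k ∧ j = l ∧ u + v = 0) := by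
    simp only [Sum.inl.injEq, Prod.mk.injEq, Subtype.mk.injEq]
    constructor
    · rintro ⟨⟨ha, hb⟩, hc⟩; exact ⟨ha.symm, hb.symm, by omega⟩
    · rintro ⟨rfl, rfl, hc⟩; exact ⟨⟨rfl, rfl⟩, by omega⟩
  unfold aop astarop
  rw [dif_pos h1, dif_pos h2]
  by_cases c1 : 0 ≤ u ∧ j ≤ r <;> by_cases c2 : v ≤ 0 ∧ l ≤ r
  · rw [if_pos c1, if_pos c2]
    rw [pderiv_mul, pderiv_X]
    rw [Pi.single_apply]
    by_cases hc : i = k ∧ j = l ∧ u + v = 0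
    · rw [if_pos (hvar.mpr hc), if_pos hc, one_mul, add_comm]
    · rw [if_neg (fun hh => hc (hvar.mp hh)), if_neg hc, zero_mul, zero_add, add_zero]
  · rw [if_pos c1, if_neg c2]
    have hc : ¬(i = k ∧ j = l ∧ u + v = 0) := by
      rintro ⟨rfl, rfl, hc⟩; exact c2 ⟨by omega, c1.2⟩
    rw [if_neg hc, add_zero, map_neg, pderiv_comm']
  · rw [if_neg c1, if_pos c2]
    have hc : ¬(i = k ∧ j = l ∧ u + v = 0) := by
      rintro ⟨rfl, rfl, hc⟩; exact c1 ⟨by omega, c2.2⟩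
    rw [if_neg hc, add_zero]; ring
  · have hvar' : (Sum.inl (⟨(i,j),h1⟩, u) : XIdx n ⊕ YIdx n) =
        Sum.inl (⟨(k,l),h2⟩, -v) ↔ (i = k ∧ j = l ∧ u + v = 0) := by
      rw [eq_comm]; exact hvar
    rw [if_neg c1, if_neg c2]
    rw [mul_neg, pderiv_mul, pderiv_X, Pi.single_apply]
    by_cases hc : i = k ∧ j = l ∧ u + v = 0
    · rw [if_pos (hvar'.mpr hc), if_pos hc, one_mul]; ring
    · rw [if_neg (fun hh => hc (hvar'.mp hh)), if_neg hc, zero_mul]; ring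

end Comm
section Supp

variable {n r : ℕ}

lemma aop_sub (i j : ℕ) (u : ℤ) (q₁ q₂ : FSp n) :
    aop n r i j u (q₁ - q₂) = aop n r i j u q₁ - aop n r i j u q₂ := by
  unfold aop; split_ifs <;> simp [mul_sub]

lemma astar_sub (i j : ℕ) (u : ℤ) (q₁ q₂ : FSp n) :
    astarop n r i j u (q₁ - q₂) = astarop n r i j u q₁ - astarop n r i j u q₂ := by
  unfold astarop; split_ifs <;> simp [mul_sub] <;> abel

lemma aop_eq_zero_of {i j : ℕ} {u : ℤ} (h : 1 ≤ i ∧ i ≤ j ∧ j ≤ n)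
    (hc : 0 ≤ u ∧ j ≤ r) {q : FSp n}
    (hv : (Sum.inl (⟨(i,j),h⟩, u) : XIdx n ⊕ YIdx n) ∉ q.vars) :
    aop n r i j u q = 0 := by
  unfold aop; rw [dif_pos h, if_pos hc]
  exact pderiv_eq_zero_of_notMem_vars hv

lemma astar_eq_zero_of {i j : ℕ} {u : ℤ} (h : 1 ≤ i ∧ i ≤ j ∧ j ≤ n)
    (hc : ¬(u ≤ 0 ∧ j ≤ r)) {q : FSp n}
    (hv : (Sum.inl (⟨(i,j),h⟩, -u) : XIdx n ⊕ YIdx n) ∉ q.vars) :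
    astarop n r i j u q = 0 := by
  unfold astarop; rw [dif_pos h, if_neg hc]
  simp [pderiv_eq_zero_of_notMem_vars hv]

lemma varsFin (q : FSp n) (w : {v : ℕ × ℕ // 1 ≤ v.1 ∧ v.1 ≤ v.2 ∧ v.2 ≤ n})
    (c : ℤ) : Set.Finite {s : ℤ | (Sum.inl (w, s - c) : XIdx n ⊕ YIdx n) ∈ q.vars} := by
  have : {s : ℤ | (Sum.inl (w, s - c) : XIdx n ⊕ YIdx n) ∈ q.vars} =
      (fun s : ℤ => (Sum.inl (w, s - c) : XIdx n ⊕ YIdx n)) ⁻¹' ↑q.vars := by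
    ext s; simp
  rw [this]
  apply Set.Finite.preimage _ q.vars.finite_toSet
  intro s₁ _ s₂ _ hh
  simp only [Sum.inl.injEq, Prod.mk.injEq] at hh
  omega

lemma supp_AS_finite {a c b : ℕ} (h1 : 1 ≤ a ∧ a ≤ b ∧ b ≤ n)
    (h2 : 1 ≤ c ∧ c ≤ b ∧ b ≤ n) (hac : a ≠ c) (p : ℤ) (q : FSp n) :
    (Function.support fun s : ℤ =>
      aop n r a b s (astarop n r c b (p - s) q)).Finite := by
  apply Set.Finite.subset
    (((varsFin q ⟨(a,b),h1⟩ 0).union (varsFin q ⟨(c,b),h2⟩ p)).union (Set.finite_Icc p 0))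
  intro s hs
  by_contra hE
  simp only [Set.mem_union, Set.mem_setOf_eq, Set.mem_Icc, not_or] at hE
  obtain ⟨⟨hv1, hv2⟩, hI⟩ := hE
  apply hs
  show aop n r a b s (astarop n r c b (p - s) q) = 0
  by_cases hc1 : 0 ≤ s ∧ b ≤ r
  · rw [aop_astar h1 h2 q, aop_eq_zero_of h1 hc1 (by simpa using hv1), astar_zero,
      if_neg (by tauto), add_zero]
  · have hc2 : ¬(p - s ≤ 0 ∧ b ≤ r) := by
      rintro ⟨hps, hbr⟩
      have hs0 : ¬ (0:ℤ) ≤ s := fun h0 => hc1 ⟨h0, hbr⟩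
      exact hI ⟨by omega, by omega⟩
    rw [astar_eq_zero_of h2 hc2 (by rw [show -(p - s) = s - p by ring]; exact hv2),
      aop_zero]

lemma supp_nAA_finite {a b : ℕ} (h : 1 ≤ a ∧ a ≤ b ∧ b ≤ n) (m : ℤ) (q : FSp n) :
    (Function.support fun s : ℤ => nAA n r a b a b s (m - s) q).Finite := by
  apply Set.Finite.subset
    (((varsFin q ⟨(a,b),h⟩ 0).union (varsFin q ⟨(a,b),h⟩ m)).union (Set.finite_Icc m 0))
  intro s hs
  by_contra hE
  simp only [Set.mem_union, Set.mem_setOf_eq, Set.mem_Icc, not_or] at hE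
  obtain ⟨⟨hv1, hv2⟩, hI⟩ := hE
  apply hs
  show nAA n r a b a b s (m - s) q = 0
  unfold nAA
  by_cases hc1 : 0 ≤ s ∧ b ≤ r
  · rw [if_pos hc1, aop_eq_zero_of h hc1 (by simpa using hv1), astar_zero]
  · rw [if_neg hc1]
    have hc2 : ¬(m - s ≤ 0 ∧ b ≤ r) := by
      rintro ⟨hps, hbr⟩
      have hs0 : ¬ (0:ℤ) ≤ s := fun h0 => hc1 ⟨h0, hbr⟩
      exact hI ⟨by omega, by omega⟩
    rw [astar_eq_zero_of h hc2 (by rw [show -(m - s) = s - m by ring]; exact hv2),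
      aop_zero]

lemma nAA_add (i j k l : ℕ) (s t : ℤ) (q₁ q₂ : FSp n) :
    nAA n r i j k l s t (q₁ + q₂) = nAA n r i j k l s t q₁ + nAA n r i j k l s t q₂ := by
  unfold nAA; split_ifs <;> simp [aop_add, astar_add]

lemma nAA_zero (i j k l : ℕ) (s t : ℤ) :
    nAA n r i j k l s t (0 : FSp n) = 0 := by
  unfold nAA; split_ifs <;> simp [aop_zero, astar_zero]

lemma nAAmode_add {a b : ℕ} (h : 1 ≤ a ∧ a ≤ b ∧ b ≤ n) (m : ℤ) (q₁ q₂ : FSp n) :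
    nAAmode n r a b a b m (q₁ + q₂) =
      nAAmode n r a b a b m q₁ + nAAmode n r a b a b m q₂ := by
  unfold nAAmode
  rw [← finsum_add_distrib (supp_nAA_finite h m q₁) (supp_nAA_finite h m q₂)]
  exact finsum_congr fun s => nAA_add a b a b s (m - s) q₁ q₂

lemma T1 {a b k l : ℕ} (h1 : 1 ≤ a ∧ a ≤ b ∧ b ≤ n) (h2 : 1 ≤ k ∧ k ≤ l ∧ l ≤ n)
    (s t u : ℤ) (q : FSp n) :
    nAA n r a b a b s t (aop n r k l u q) - aop n r k l u (nAA n r a b a b s t q)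
      = if k = a ∧ l = b ∧ u + t = 0 then -(aop n r a b s q) else 0 := by
  unfold nAA
  by_cases hann : 0 ≤ s ∧ b ≤ r
  · rw [if_pos hann]
    show astarop n r a b t (aop n r a b s (aop n r k l u q))
        - aop n r k l u (astarop n r a b t (aop n r a b s q)) = _
    rw [aop_aop a b k l s u q, aop_astar h2 h1 (aop n r a b s q)]
    split_ifs <;> abel
  · rw [if_neg hann]
    show aop n r a b s (astarop n r a b t (aop n r k l u q))
        - aop n r k l u (aop n r a b s (astarop n r a b t q)) = _
    have h' : astarop n r a b t (aop n r k l u q) =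
        aop n r k l u (astarop n r a b t q) -
          (if k = a ∧ l = b ∧ u + t = 0 then q else 0) := by
      rw [aop_astar h2 h1 q]; abel
    rw [h', aop_sub, aop_aop a b k l s u (astarop n r a b t q),
      apply_ite (aop n r a b s), aop_zero]
    split_ifs <;> abel

lemma T1star {a b k l : ℕ} (h1 : 1 ≤ a ∧ a ≤ b ∧ b ≤ n) (h2 : 1 ≤ k ∧ k ≤ l ∧ l ≤ n)
    (s t v : ℤ) (q : FSp n) :
    nAA n r a b a b s t (astarop n r k l v q)
        - astarop n r k l v (nAA n r a b a b s t q)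
      = if a = k ∧ b = l ∧ s + v = 0 then astarop n r a b t q else 0 := by
  unfold nAA
  by_cases hann : 0 ≤ s ∧ b ≤ r
  · rw [if_pos hann]
    show astarop n r a b t (aop n r a b s (astarop n r k l v q))
        - astarop n r k l v (astarop n r a b t (aop n r a b s q)) = _
    rw [aop_astar h1 h2 q, astar_add, astar_astar a b k l t v (aop n r a b s q),
      apply_ite (astarop n r a b t), astar_zero]
    split_ifs <;> abel
  · rw [if_neg hann]
    show aop n r a b s (astarop n r a b t (astarop n r k l v q))
        - astarop n r k l v (aop n r a b s (astarop n r a b t q)) = _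
    rw [astar_astar a b k l t v q, aop_astar h1 h2 (astarop n r a b t q)]
    split_ifs <;> abel

end Supp
section Modes

variable {n r : ℕ}

lemma M1 {a b k l : ℕ} (h1 : 1 ≤ a ∧ a ≤ b ∧ b ≤ n) (h2 : 1 ≤ k ∧ k ≤ l ∧ l ≤ n)
    (m u : ℤ) (q : FSp n) :
    nAAmode n r a b a b m (aop n r k l u q)
        - aop n r k l u (nAAmode n r a b a b m q)
      = if k = a ∧ l = b then -(aop n r a b (m + u) q) else 0 := by
  have hmap : aop n r k l u (nAAmode n r a b a b m q)
      = ∑ᶠ s : ℤ, aop n r k l u (nAA n r a b a b s (m - s) q) :=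
    (AddMonoidHom.mk' (aop n r k l u) (aop_add k l u)).map_finsum
      (supp_nAA_finite h1 m q)
  have hsupp2 : (Function.support fun s : ℤ =>
      aop n r k l u (nAA n r a b a b s (m - s) q)).Finite := by
    apply (supp_nAA_finite h1 m q).subset
    intro s hs
    simp only [Function.mem_support] at hs ⊢
    intro h0; exact hs (by rw [h0, aop_zero])
  rw [show nAAmode n r a b a b m (aop n r k l u q)
      = ∑ᶠ s : ℤ, nAA n r a b a b s (m - s) (aop n r k l u q) from rfl, hmap,
    ← finsum_sub_distrib (supp_nAA_finite h1 m (aop n r k l u q)) hsupp2,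
    finsum_congr (fun s => T1 h1 h2 s (m - s) u q)]
  by_cases hkl : k = a ∧ l = b
  · rw [if_pos hkl,
      finsum_eq_single _ (m + u) (fun x hx => if_neg (by rintro ⟨_, _, h3⟩; omega)),
      if_pos ⟨hkl.1, hkl.2, by ring⟩]
  · rw [if_neg hkl,
      finsum_congr (fun s => if_neg (fun hh => hkl ⟨hh.1, hh.2.1⟩)), finsum_zero]

lemma M1star {a b k l : ℕ} (h1 : 1 ≤ a ∧ a ≤ b ∧ b ≤ n) (h2 : 1 ≤ k ∧ k ≤ l ∧ l ≤ n)
    (m v : ℤ) (q : FSp n) :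
    nAAmode n r a b a b m (astarop n r k l v q)
        - astarop n r k l v (nAAmode n r a b a b m q)
      = if a = k ∧ b = l then astarop n r a b (m + v) q else 0 := by
  have hmap : astarop n r k l v (nAAmode n r a b a b m q)
      = ∑ᶠ s : ℤ, astarop n r k l v (nAA n r a b a b s (m - s) q) :=
    (AddMonoidHom.mk' (astarop n r k l v) (astar_add k l v)).map_finsum
      (supp_nAA_finite h1 m q)
  have hsupp2 : (Function.support fun s : ℤ =>
      astarop n r k l v (nAA n r a b a b s (m - s) q)).Finite := by
    apply (supp_nAA_finite h1 m q).subset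
    intro s hs
    simp only [Function.mem_support] at hs ⊢
    intro h0; exact hs (by rw [h0, astar_zero])
  rw [show nAAmode n r a b a b m (astarop n r k l v q)
      = ∑ᶠ s : ℤ, nAA n r a b a b s (m - s) (astarop n r k l v q) from rfl, hmap,
    ← finsum_sub_distrib (supp_nAA_finite h1 m (astarop n r k l v q)) hsupp2,
    finsum_congr (fun s => T1star h1 h2 s (m - s) v q)]
  by_cases hkl : a = k ∧ b = l
  · rw [if_pos hkl,
      finsum_eq_single _ (-v) (fun x hx => if_neg (by rintro ⟨_, _, h3⟩; omega)),
      if_pos ⟨hkl.1, hkl.2, by ring⟩, show m - -v = m + v from by ring]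
  · rw [if_neg hkl,
      finsum_congr (fun s => if_neg (fun hh => hkl ⟨hh.1, hh.2.1⟩)), finsum_zero]

lemma aop_pderiv_inr (k l : ℕ) (u : ℤ) (w : YIdx n) (q : FSp n) :
    aop n r k l u (pderiv (Sum.inr w) q) = pderiv (Sum.inr w) (aop n r k l u q) := by
  unfold aop; split_ifs
  · exact pderiv_comm' _ _ q
  · exact (pderiv_X_mul (by simp) q).symm
  · simp

lemma astar_pderiv_inr (k l : ℕ) (u : ℤ) (w : YIdx n) (q : FSp n) :
    astarop n r k l u (pderiv (Sum.inr w) q)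
      = pderiv (Sum.inr w) (astarop n r k l u q) := by
  unfold astarop; split_ifs
  · exact (pderiv_X_mul (by simp) q).symm
  · rw [map_neg, pderiv_comm']
  · simp

lemma pderiv_yPoly (v : XIdx n) (ee : ℕ → ℕ → ℂ) (ii : ℕ) (mm : {m : ℕ // 1 ≤ m}) :
    pderiv (Sum.inl v) (yPoly n ee ii mm) = 0 := by
  unfold yPoly
  rw [map_sum]
  apply Finset.sum_eq_zero
  intro x _
  rw [Derivation.map_smul, pderiv_X_of_ne (by simp), smul_zero]

lemma aop_ymul (k l : ℕ) (u : ℤ) (ee : ℕ → ℕ → ℂ) (ii : ℕ) (mm : {m : ℕ // 1 ≤ m})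
    (q : FSp n) :
    aop n r k l u (yPoly n ee ii mm * q) = yPoly n ee ii mm * aop n r k l u q := by
  unfold aop; split_ifs with hv hc
  · show pderiv (Sum.inl (⟨(k,l),hv⟩, u)) (yPoly n ee ii mm * q)
        = yPoly n ee ii mm * pderiv (Sum.inl (⟨(k,l),hv⟩, u)) q
    rw [pderiv_mul, pderiv_yPoly, zero_mul, zero_add]
  · ring
  · simp

lemma astar_ymul (k l : ℕ) (u : ℤ) (ee : ℕ → ℕ → ℂ) (ii : ℕ) (mm : {m : ℕ // 1 ≤ m})
    (q : FSp n) :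
    astarop n r k l u (yPoly n ee ii mm * q)
      = yPoly n ee ii mm * astarop n r k l u q := by
  unfold astarop; split_ifs with hv hc
  · ring
  · show -pderiv (Sum.inl (⟨(k,l),hv⟩, -u)) (yPoly n ee ii mm * q)
        = yPoly n ee ii mm * -pderiv (Sum.inl (⟨(k,l),hv⟩, -u)) q
    rw [pderiv_mul, pderiv_yPoly, zero_mul, zero_add, mul_neg]
  · simp

lemma aop_map_sum {α : Type*} (k l : ℕ) (u : ℤ) (s : Finset α) (f : α → FSp n) :
    aop n r k l u (∑ x ∈ s, f x) = ∑ x ∈ s, aop n r k l u (f x) :=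
  map_sum (AddMonoidHom.mk' (aop n r k l u) (aop_add k l u)) f s

lemma astar_map_sum {α : Type*} (k l : ℕ) (u : ℤ) (s : Finset α) (f : α → FSp n) :
    astarop n r k l u (∑ x ∈ s, f x) = ∑ x ∈ s, astarop n r k l u (f x) :=
  map_sum (AddMonoidHom.mk' (astarop n r k l u) (astar_add k l u)) f s

lemma bop_aop (ee : ℕ → ℕ → ℂ) (lam : ℕ → ℂ) (ii k l : ℕ) (mb u : ℤ) (q : FSp n) :
    bop n ee lam ii mb (aop n r k l u q) = aop n r k l u (bop n ee lam ii mb q) := by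
  unfold bop; split_ifs with h h'
  · symm
    rw [aop_smul]
    congr 1
    rw [aop_map_sum]
    exact Finset.sum_congr rfl fun x _ => by rw [aop_smul, aop_pderiv_inr]
  · rw [aop_smul]
  · rw [aop_ymul]

lemma bop_astar (ee : ℕ → ℕ → ℂ) (lam : ℕ → ℂ) (ii k l : ℕ) (mb u : ℤ) (q : FSp n) :
    bop n ee lam ii mb (astarop n r k l u q)
      = astarop n r k l u (bop n ee lam ii mb q) := by
  unfold bop; split_ifs with h h'
  · symm
    rw [astar_smul]
    congr 1
    rw [astar_map_sum]
    exact Finset.sum_congr rfl fun x _ => by rw [astar_smul, astar_pderiv_inr]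
  · rw [astar_smul]
  · rw [astar_ymul]

lemma bop_add (ee : ℕ → ℕ → ℂ) (lam : ℕ → ℂ) (ii : ℕ) (mb : ℤ) (q₁ q₂ : FSp n) :
    bop n ee lam ii mb (q₁ + q₂) = bop n ee lam ii mb q₁ + bop n ee lam ii mb q₂ := by
  unfold bop; split_ifs <;>
    simp [map_add, smul_add, mul_add, Finset.sum_add_distrib]

end Modes
section Blocks

variable {n r : ℕ}

lemma M2' {a b f g l : ℕ} (h1 : 1 ≤ a ∧ a ≤ b ∧ b ≤ n) (h2 : 1 ≤ f ∧ f ≤ l ∧ l ≤ n)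
    (h3 : 1 ≤ g ∧ g ≤ l ∧ l ≤ n) (m u v : ℤ) (q : FSp n) :
    nAAmode n r a b a b m (aop n r f l u (astarop n r g l v q))
        - aop n r f l u (astarop n r g l v (nAAmode n r a b a b m q))
      = (if f = a ∧ l = b then -(aop n r a b (m + u) (astarop n r g l v q)) else 0)
        + (if a = g ∧ b = l then aop n r f l u (astarop n r a b (m + v) q) else 0) := by
  have e1 := M1 (n := n) (r := r) h1 h2 m u (astarop n r g l v q)
  have e2 := M1star (n := n) (r := r) h1 h3 m v q
  have e2' : nAAmode n r a b a b m (astarop n r g l v q)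
      = astarop n r g l v (nAAmode n r a b a b m q)
        + (if a = g ∧ b = l then astarop n r a b (m + v) q else 0) := by
    rw [← e2]; abel
  have e1' : nAAmode n r a b a b m (aop n r f l u (astarop n r g l v q))
      = aop n r f l u (nAAmode n r a b a b m (astarop n r g l v q))
        + (if f = a ∧ l = b then -(aop n r a b (m + u) (astarop n r g l v q)) else 0) := by
    rw [← e1]; abel
  rw [e1', e2', aop_add, apply_ite (aop n r f l u), aop_zero]
  abel

lemma supp_AS_shift {a c b : ℕ} (h1 : 1 ≤ a ∧ a ≤ b ∧ b ≤ n)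
    (h2 : 1 ≤ c ∧ c ≤ b ∧ b ≤ n) (hac : a ≠ c) (m p : ℤ) (q : FSp n) :
    (Function.support fun s : ℤ =>
      aop n r a b (m + s) (astarop n r c b (p - s) q)).Finite := by
  have hinj : Function.Injective (fun s : ℤ => s + m) := fun s₁ s₂ h => by
    simpa using h
  apply Set.Finite.subset
    ((supp_AS_finite (n := n) (r := r) h1 h2 hac (m + p) q).preimage hinj.injOn)
  intro s hs
  simp only [Set.mem_preimage, Function.mem_support] at hs ⊢
  intro h0
  apply hs
  rw [show m + p - (s + m) = p - s from by ring, show s + m = m + s from by ring] at h0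
  exact h0

lemma AS_reindex (a c b : ℕ) (m p : ℤ) (q : FSp n) :
    (∑ᶠ s : ℤ, aop n r a b (m + s) (astarop n r c b (p - s) q))
      = ∑ᶠ s : ℤ, aop n r a b s (astarop n r c b (m + p - s) q) :=
  finsum_eq_of_bijective (fun s => s + m) (Equiv.addRight m).bijective
    (fun s => by rw [show m + s = s + m from by ring,
      show p - s = m + p - (s + m) from by ring])

lemma M2 {a b j l : ℕ} (h1 : 1 ≤ a ∧ a ≤ b ∧ b ≤ n) (h2 : 1 ≤ j ∧ j ≤ l ∧ l ≤ n)
    (h3 : 1 ≤ j + 1 ∧ j + 1 ≤ l ∧ l ≤ n) (m p : ℤ) (q : FSp n) :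
    nAAmode n r a b a b m (∑ᶠ s : ℤ, aop n r j l s (astarop n r (j+1) l (p - s) q))
        - ∑ᶠ s : ℤ, aop n r j l s (astarop n r (j+1) l (p - s) (nAAmode n r a b a b m q))
      = (if j + 1 = a ∧ l = b then (1:ℂ) else if j = a ∧ l = b then -1 else 0) •
          ∑ᶠ s : ℤ, aop n r j l s (astarop n r (j+1) l (m + p - s) q) := by
  have hne : j ≠ j + 1 := by omega
  have hpush : nAAmode n r a b a b m
        (∑ᶠ s : ℤ, aop n r j l s (astarop n r (j+1) l (p - s) q))
      = ∑ᶠ s : ℤ, nAAmode n r a b a b m (aop n r j l s (astarop n r (j+1) l (p - s) q)) :=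
    (AddMonoidHom.mk' _ (nAAmode_add h1 m)).map_finsum (supp_AS_finite h2 h3 hne p q)
  rw [hpush]
  by_cases hA : j = a ∧ l = b
  · obtain ⟨rfl, rfl⟩ := hA
    have hB : ¬(j + 1 = j ∧ l = l) := by omega
    rw [if_neg hB, if_pos ⟨rfl, rfl⟩]
    have hterm : ∀ s : ℤ, nAAmode n r j l j l m (aop n r j l s (astarop n r (j+1) l (p - s) q))
        = aop n r j l s (astarop n r (j+1) l (p - s) (nAAmode n r j l j l m q))
          - aop n r j l (m + s) (astarop n r (j+1) l (p - s) q) := by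
      intro s
      have h := M2' (n := n) (r := r) h1 h2 h3 m s (p - s) q
      rw [if_pos ⟨rfl, rfl⟩, if_neg (by omega)] at h
      rw [add_zero] at h
      rw [sub_eq_iff_eq_add] at h
      rw [h]; abel
    rw [finsum_congr hterm,
      finsum_sub_distrib (supp_AS_finite h2 h3 hne p (nAAmode n r j l j l m q))
        (supp_AS_shift h2 h3 hne m p q),
      AS_reindex]
    simp only [neg_smul, one_smul]
    abel
  · by_cases hB : j + 1 = a ∧ l = b
    · obtain ⟨rfl, rfl⟩ := hB
      rw [if_pos ⟨rfl, rfl⟩, one_smul]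
      have hterm : ∀ s : ℤ,
          nAAmode n r (j+1) l (j+1) l m (aop n r j l s (astarop n r (j+1) l (p - s) q))
          = aop n r j l s (astarop n r (j+1) l (p - s) (nAAmode n r (j+1) l (j+1) l m q))
            + aop n r j l s (astarop n r (j+1) l (m + p - s) q) := by
        intro s
        have h := M2' (n := n) (r := r) h1 h2 h3 m s (p - s) q
        rw [if_neg (by omega), if_pos ⟨rfl, rfl⟩] at h
        rw [zero_add] at h
        rw [sub_eq_iff_eq_add] at h
        rw [h, show m + (p - s) = m + p - s from by ring]; abel
      rw [finsum_congr hterm,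
        finsum_add_distrib (supp_AS_finite h2 h3 hne p (nAAmode n r (j+1) l (j+1) l m q))
          (supp_AS_finite h2 h3 hne (m + p) q)]
      abel
    · rw [if_neg hB, if_neg hA, zero_smul]
      have hterm : ∀ s : ℤ,
          nAAmode n r a b a b m (aop n r j l s (astarop n r (j+1) l (p - s) q))
          = aop n r j l s (astarop n r (j+1) l (p - s) (nAAmode n r a b a b m q)) := by
        intro s
        have h := M2' (n := n) (r := r) h1 h2 h3 m s (p - s) q
        rw [if_neg hA, if_neg (fun hh => hB ⟨hh.1.symm, hh.2.symm⟩), add_zero] at h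
        exact sub_eq_zero.mp h
      rw [finsum_congr hterm]
      exact sub_self _

end Blocks
section RhoFLemmas

variable {n r : ℕ}

lemma rhoF_add {j : ℕ} (hj : 1 ≤ j) (hj' : j ≤ n) (p : ℤ) (q₁ q₂ : FSp n) :
    rhoF n r j p (q₁ + q₂) = rhoF n r j p q₁ + rhoF n r j p q₂ := by
  unfold rhoF
  rw [aop_add]
  have hsum : ∀ l ∈ Finset.Icc (j+1) n,
      (∑ᶠ s : ℤ, aop n r j l s (astarop n r (j+1) l (p - s) (q₁ + q₂)))
        = (∑ᶠ s : ℤ, aop n r j l s (astarop n r (j+1) l (p - s) q₁))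
          + (∑ᶠ s : ℤ, aop n r j l s (astarop n r (j+1) l (p - s) q₂)) := by
    intro l hl
    rw [Finset.mem_Icc] at hl
    have h2 : 1 ≤ j ∧ j ≤ l ∧ l ≤ n := ⟨hj, by omega, hl.2⟩
    have h3 : 1 ≤ j + 1 ∧ j + 1 ≤ l ∧ l ≤ n := ⟨by omega, hl.1, hl.2⟩
    rw [← finsum_add_distrib (supp_AS_finite (n := n) (r := r) h2 h3 (by omega) p q₁)
      (supp_AS_finite (n := n) (r := r) h2 h3 (by omega) p q₂)]
    exact finsum_congr fun s => by rw [astar_add, aop_add]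
  rw [Finset.sum_congr rfl hsum, Finset.sum_add_distrib]
  abel

lemma rhoF_smul {j : ℕ} (hj : 1 ≤ j) (hj' : j ≤ n) (p : ℤ) (c : ℂ) (q : FSp n) :
    rhoF n r j p (c • q) = c • rhoF n r j p q := by
  unfold rhoF
  rw [aop_smul]
  have hsum : ∀ l ∈ Finset.Icc (j+1) n,
      (∑ᶠ s : ℤ, aop n r j l s (astarop n r (j+1) l (p - s) (c • q)))
        = c • (∑ᶠ s : ℤ, aop n r j l s (astarop n r (j+1) l (p - s) q)) := by
    intro l hl
    rw [Finset.mem_Icc] at hl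
    have h2 : 1 ≤ j ∧ j ≤ l ∧ l ≤ n := ⟨hj, by omega, hl.2⟩
    have h3 : 1 ≤ j + 1 ∧ j + 1 ≤ l ∧ l ≤ n := ⟨by omega, hl.1, hl.2⟩
    have hterm : ∀ s : ℤ, aop n r j l s (astarop n r (j+1) l (p - s) (c • q))
        = c • aop n r j l s (astarop n r (j+1) l (p - s) q) := fun s => by
      rw [astar_smul, aop_smul]
    rw [finsum_congr hterm,
      ← smul_finsum' c (supp_AS_finite (n := n) (r := r) h2 h3 (by omega) p q)]
  rw [Finset.sum_congr rfl hsum, ← Finset.smul_sum, smul_add]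

lemma rhoF_sub {j : ℕ} (hj : 1 ≤ j) (hj' : j ≤ n) (p : ℤ) (q₁ q₂ : FSp n) :
    rhoF n r j p (q₁ - q₂) = rhoF n r j p q₁ - rhoF n r j p q₂ := by
  have h := rhoF_add (n := n) (r := r) hj hj' p (q₁ - q₂) q₂
  rw [sub_add_cancel] at h
  rw [h]; abel

lemma Mb {j : ℕ} (hj : 1 ≤ j) (hj' : j ≤ n) (ee : ℕ → ℕ → ℂ) (lam : ℕ → ℂ)
    (ii : ℕ) (mb p : ℤ) (q : FSp n) :
    bop n ee lam ii mb (rhoF n r j p q) = rhoF n r j p (bop n ee lam ii mb q) := by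
  unfold rhoF
  rw [bop_add, bop_aop]
  congr 1
  rw [show bop n ee lam ii mb (∑ l ∈ Finset.Icc (j+1) n,
      ∑ᶠ s : ℤ, aop n r j l s (astarop n r (j+1) l (p - s) q))
    = ∑ l ∈ Finset.Icc (j+1) n, bop n ee lam ii mb
        (∑ᶠ s : ℤ, aop n r j l s (astarop n r (j+1) l (p - s) q)) from
    map_sum (AddMonoidHom.mk' _ (bop_add ee lam ii mb)) _ _]
  apply Finset.sum_congr rfl
  intro l hl
  rw [Finset.mem_Icc] at hl
  have h2 : 1 ≤ j ∧ j ≤ l ∧ l ≤ n := ⟨hj, by omega, hl.2⟩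
  have h3 : 1 ≤ j + 1 ∧ j + 1 ≤ l ∧ l ≤ n := ⟨by omega, hl.1, hl.2⟩
  rw [show bop n ee lam ii mb (∑ᶠ s : ℤ, aop n r j l s (astarop n r (j+1) l (p - s) q))
      = ∑ᶠ s : ℤ, bop n ee lam ii mb (aop n r j l s (astarop n r (j+1) l (p - s) q)) from
    (AddMonoidHom.mk' _ (bop_add ee lam ii mb)).map_finsum
      (supp_AS_finite (n := n) (r := r) h2 h3 (by omega) p q)]
  exact finsum_congr fun s => by rw [bop_aop, bop_astar]

lemma M3 {a b j : ℕ} (h1 : 1 ≤ a ∧ a ≤ b ∧ b ≤ n) (hj : 1 ≤ j) (hj' : j ≤ n)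
    (m p : ℤ) (q : FSp n) :
    nAAmode n r a b a b m (rhoF n r j p q) - rhoF n r j p (nAAmode n r a b a b m q)
      = (if j = a ∧ j = b then (-1:ℂ) else 0) • aop n r j j (m + p) q
        + ∑ l ∈ Finset.Icc (j+1) n,
            (if j + 1 = a ∧ l = b then (1:ℂ) else if j = a ∧ l = b then (-1:ℂ) else 0) •
              ∑ᶠ s : ℤ, aop n r j l s (astarop n r (j+1) l (m + p - s) q) := by
  have hjj : 1 ≤ j ∧ j ≤ j ∧ j ≤ n := ⟨hj, le_refl j, hj'⟩
  have hsplit : nAAmode n r a b a b m (rhoF n r j p q)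
      = nAAmode n r a b a b m (aop n r j j p q)
        + ∑ l ∈ Finset.Icc (j+1) n, nAAmode n r a b a b m
            (∑ᶠ s : ℤ, aop n r j l s (astarop n r (j+1) l (p - s) q)) := by
    rw [show rhoF n r j p q = aop n r j j p q + ∑ l ∈ Finset.Icc (j+1) n,
        ∑ᶠ s : ℤ, aop n r j l s (astarop n r (j+1) l (p - s) q) from rfl,
      nAAmode_add h1 m,
      show nAAmode n r a b a b m (∑ l ∈ Finset.Icc (j+1) n,
          ∑ᶠ s : ℤ, aop n r j l s (astarop n r (j+1) l (p - s) q))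
        = ∑ l ∈ Finset.Icc (j+1) n, nAAmode n r a b a b m
            (∑ᶠ s : ℤ, aop n r j l s (astarop n r (j+1) l (p - s) q)) from
        map_sum (AddMonoidHom.mk' _ (nAAmode_add h1 m)) _ _]
  rw [hsplit, show rhoF n r j p (nAAmode n r a b a b m q)
      = aop n r j j p (nAAmode n r a b a b m q) + ∑ l ∈ Finset.Icc (j+1) n,
          ∑ᶠ s : ℤ, aop n r j l s (astarop n r (j+1) l (p - s) (nAAmode n r a b a b m q))
      from rfl]
  have hA := M1 (n := n) (r := r) h1 hjj m p q
  have hAcoef : (if j = a ∧ j = b then -(aop n r a b (m + p) q) else 0)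
      = (if j = a ∧ j = b then (-1:ℂ) else 0) • aop n r j j (m + p) q := by
    by_cases hc : j = a ∧ j = b
    · obtain ⟨h₁, h₂⟩ := hc
      subst h₁; subst h₂
      rw [if_pos ⟨rfl, rfl⟩, if_pos ⟨rfl, rfl⟩, neg_smul, one_smul]
    · rw [if_neg hc, if_neg hc, zero_smul]
  have hsum : ∀ l ∈ Finset.Icc (j+1) n,
      nAAmode n r a b a b m (∑ᶠ s : ℤ, aop n r j l s (astarop n r (j+1) l (p - s) q))
        - (∑ᶠ s : ℤ, aop n r j l s (astarop n r (j+1) l (p - s) (nAAmode n r a b a b m q)))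
      = (if j + 1 = a ∧ l = b then (1:ℂ) else if j = a ∧ l = b then (-1:ℂ) else 0) •
          ∑ᶠ s : ℤ, aop n r j l s (astarop n r (j+1) l (m + p - s) q) := by
    intro l hl
    rw [Finset.mem_Icc] at hl
    exact M2 (n := n) (r := r) h1 ⟨hj, by omega, hl.2⟩ ⟨by omega, hl.1, hl.2⟩ m p q
  rw [← hAcoef, ← hA, ← Finset.sum_congr rfl hsum, Finset.sum_sub_distrib]
  abel

end RhoFLemmas

lemma sum_delta_left (s : Finset ℕ) (t : ℕ) (Q : Prop) [Decidable Q] (c : ℂ) :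
    (∑ x ∈ s, if t = x ∧ Q then c else 0) = if t ∈ s ∧ Q then c else 0 := by
  have h : ∀ x ∈ s, (if t = x ∧ Q then c else 0)
      = if x = t then (if Q then c else 0) else 0 := by
    intro x _
    rcases eq_or_ne x t with rfl | hne
    · simp
    · rw [if_neg (fun hh => hne hh.1.symm), if_neg hne]
  rw [Finset.sum_congr rfl h, Finset.sum_ite_eq' s t (fun _ => if Q then c else 0)]
  by_cases hs : t ∈ s <;> by_cases hQ : Q <;> simp [hs, hQ]

lemma sum_delta_right (s : Finset ℕ) (t : ℕ) (Q : Prop) [Decidable Q] (c : ℂ) :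
    (∑ x ∈ s, if Q ∧ t = x then c else 0) = if Q ∧ t ∈ s then c else 0 := by
  have h : ∀ x ∈ s, (if Q ∧ t = x then c else 0)
      = if x = t then (if Q then c else 0) else 0 := by
    intro x _
    rcases eq_or_ne x t with rfl | hne
    · simp
    · rw [if_neg (fun hh => hne hh.2.symm), if_neg hne]
  rw [Finset.sum_congr rfl h, Finset.sum_ite_eq' s t (fun _ => if Q then c else 0)]
  by_cases hs : t ∈ s <;> by_cases hQ : Q <;> simp [hs, hQ]

lemma sum_two_delta (s : Finset ℕ) (t₁ t₂ : ℕ) (h12 : t₁ ≠ t₂) (Q1 Q2 : Prop)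
    [Decidable Q1] [Decidable Q2] (c1 c2 : ℂ) :
    (∑ x ∈ s, if t₁ = x ∧ Q1 then c1 else if t₂ = x ∧ Q2 then c2 else 0)
      = (if t₁ ∈ s ∧ Q1 then c1 else 0) + (if t₂ ∈ s ∧ Q2 then c2 else 0) := by
  have h : ∀ x ∈ s, (if t₁ = x ∧ Q1 then c1 else if t₂ = x ∧ Q2 then c2 else 0)
      = (if t₁ = x ∧ Q1 then c1 else 0) + (if t₂ = x ∧ Q2 then c2 else 0) := by
    intro x _
    by_cases e1 : t₁ = x ∧ Q1
    · rw [if_pos e1, if_pos e1, if_neg (fun e2 => h12 (e1.1.trans e2.1.symm)), add_zero]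
    · rw [if_neg e1, if_neg e1, zero_add]
  rw [Finset.sum_congr rfl h, Finset.sum_add_distrib, sum_delta_left, sum_delta_left]

lemma sum_two_delta_right (s : Finset ℕ) (t : ℕ) (Q1 Q2 : Prop) [Decidable Q1]
    [Decidable Q2] (hQ : ¬(Q1 ∧ Q2)) (c1 c2 : ℂ) :
    (∑ x ∈ s, if Q1 ∧ t = x then c1 else if Q2 ∧ t = x then c2 else 0)
      = (if Q1 ∧ t ∈ s then c1 else 0) + (if Q2 ∧ t ∈ s then c2 else 0) := by
  have h : ∀ x ∈ s, (if Q1 ∧ t = x then c1 else if Q2 ∧ t = x then c2 else 0)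
      = (if Q1 ∧ t = x then c1 else 0) + (if Q2 ∧ t = x then c2 else 0) := by
    intro x _
    by_cases e1 : Q1 ∧ t = x
    · rw [if_pos e1, if_pos e1, if_neg (fun e2 => hQ ⟨e1.1, e2.1⟩), add_zero]
    · rw [if_neg e1, if_neg e1, zero_add]
  rw [Finset.sum_congr rfl h, Finset.sum_add_distrib, sum_delta_right, sum_delta_right]

lemma coeffA_eval {n i j : ℕ} (hi : 1 ≤ i) (hi' : i ≤ n) (hj : 1 ≤ j) (hj' : j ≤ n) :
    2 * (if j = i ∧ j = i then (-1:ℂ) else 0)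
      + (∑ x ∈ Finset.Ico 1 i, ((if j = x ∧ j = i then (-1:ℂ) else 0)
          - (if j = x ∧ j = i - 1 then (-1:ℂ) else 0)))
      + (∑ x ∈ Finset.Icc (i+1) n, ((if j = i ∧ j = x then (-1:ℂ) else 0)
          - (if j = i + 1 ∧ j = x then (-1:ℂ) else 0)))
    = -(cartanEntry i j) := by
  rw [Finset.sum_sub_distrib, Finset.sum_sub_distrib,
    sum_delta_left (Finset.Ico 1 i) j (j = i) (-1),
    sum_delta_left (Finset.Ico 1 i) j (j = i - 1) (-1),
    sum_delta_right (Finset.Icc (i+1) n) j (j = i) (-1),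
    sum_delta_right (Finset.Icc (i+1) n) j (j = i + 1) (-1)]
  simp only [Finset.mem_Ico, Finset.mem_Icc, cartanEntry]
  split_ifs
  all_goals try (exfalso; omega)
  all_goals norm_num

lemma coeffB_eval {n i j l : ℕ} (hi : 1 ≤ i) (hi' : i ≤ n) (hj : 1 ≤ j) (hj' : j ≤ n)
    (hl : j + 1 ≤ l) (hl' : l ≤ n) :
    2 * (if j + 1 = i ∧ l = i then (1:ℂ) else if j = i ∧ l = i then -1 else 0)
      + (∑ x ∈ Finset.Ico 1 i,
          ((if j + 1 = x ∧ l = i then (1:ℂ) else if j = x ∧ l = i then -1 else 0)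
            - (if j + 1 = x ∧ l = i - 1 then (1:ℂ) else if j = x ∧ l = i - 1 then -1 else 0)))
      + (∑ x ∈ Finset.Icc (i+1) n,
          ((if j + 1 = i ∧ l = x then (1:ℂ) else if j = i ∧ l = x then -1 else 0)
            - (if j + 1 = i + 1 ∧ l = x then (1:ℂ) else if j = i + 1 ∧ l = x then -1 else 0)))
    = -(cartanEntry i j) := by
  rw [Finset.sum_sub_distrib, Finset.sum_sub_distrib,
    sum_two_delta (Finset.Ico 1 i) (j+1) j (by omega) (l = i) (l = i) 1 (-1),
    sum_two_delta (Finset.Ico 1 i) (j+1) j (by omega) (l = i-1) (l = i-1) 1 (-1),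
    sum_two_delta_right (Finset.Icc (i+1) n) l (j+1 = i) (j = i) (by omega) 1 (-1),
    sum_two_delta_right (Finset.Icc (i+1) n) l (j+1 = i+1) (j = i+1) (by omega) 1 (-1)]
  simp only [Finset.mem_Ico, Finset.mem_Icc, cartanEntry]
  by_cases hS1 : j = i
  · by_cases hL1 : l = i
    · exfalso; omega
    · by_cases hL2 : l = i - 1
      · exfalso; omega
      · simp only [iff_false_intro (show ¬(j + 1 = i ∧ l = i) by omega),
            iff_false_intro (show ¬(j = i ∧ l = i) by omega),
            iff_false_intro (show ¬((1 ≤ j + 1 ∧ j + 1 < i) ∧ l = i) by omega),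
            iff_false_intro (show ¬((1 ≤ j ∧ j < i) ∧ l = i) by omega),
            iff_false_intro (show ¬((1 ≤ j + 1 ∧ j + 1 < i) ∧ l = i - 1) by omega),
            iff_false_intro (show ¬((1 ≤ j ∧ j < i) ∧ l = i - 1) by omega),
            iff_false_intro (show ¬(j + 1 = i ∧ i + 1 ≤ l ∧ l ≤ n) by omega),
            iff_true_intro (show j = i ∧ i + 1 ≤ l ∧ l ≤ n by omega),
            iff_true_intro (show j + 1 = i + 1 ∧ i + 1 ≤ l ∧ l ≤ n by omega),
            iff_false_intro (show ¬(j = i + 1 ∧ i + 1 ≤ l ∧ l ≤ n) by omega),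
            iff_true_intro (show i = j by omega),
            iff_false_intro (show ¬(i + 1 = j ∨ j + 1 = i) by omega)]
        norm_num
  · by_cases hS2 : j + 1 = i
    · by_cases hL1 : l = i
      · simp only [iff_true_intro (show j + 1 = i ∧ l = i by omega),
            iff_false_intro (show ¬(j = i ∧ l = i) by omega),
            iff_false_intro (show ¬((1 ≤ j + 1 ∧ j + 1 < i) ∧ l = i) by omega),
            iff_true_intro (show (1 ≤ j ∧ j < i) ∧ l = i by omega),
            iff_false_intro (show ¬((1 ≤ j + 1 ∧ j + 1 < i) ∧ l = i - 1) by omega),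
            iff_false_intro (show ¬((1 ≤ j ∧ j < i) ∧ l = i - 1) by omega),
            iff_false_intro (show ¬(j + 1 = i ∧ i + 1 ≤ l ∧ l ≤ n) by omega),
            iff_false_intro (show ¬(j = i ∧ i + 1 ≤ l ∧ l ≤ n) by omega),
            iff_false_intro (show ¬(j + 1 = i + 1 ∧ i + 1 ≤ l ∧ l ≤ n) by omega),
            iff_false_intro (show ¬(j = i + 1 ∧ i + 1 ≤ l ∧ l ≤ n) by omega),
            iff_false_intro (show ¬(i = j) by omega),
            iff_true_intro (show i + 1 = j ∨ j + 1 = i by omega)]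
        norm_num
      · by_cases hL2 : l = i - 1
        · exfalso; omega
        · simp only [iff_false_intro (show ¬(j + 1 = i ∧ l = i) by omega),
              iff_false_intro (show ¬(j = i ∧ l = i) by omega),
              iff_false_intro (show ¬((1 ≤ j + 1 ∧ j + 1 < i) ∧ l = i) by omega),
              iff_false_intro (show ¬((1 ≤ j ∧ j < i) ∧ l = i) by omega),
              iff_false_intro (show ¬((1 ≤ j + 1 ∧ j + 1 < i) ∧ l = i - 1) by omega),
              iff_false_intro (show ¬((1 ≤ j ∧ j < i) ∧ l = i - 1) by omega),
              iff_true_intro (show j + 1 = i ∧ i + 1 ≤ l ∧ l ≤ n by omega),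
              iff_false_intro (show ¬(j = i ∧ i + 1 ≤ l ∧ l ≤ n) by omega),
              iff_false_intro (show ¬(j + 1 = i + 1 ∧ i + 1 ≤ l ∧ l ≤ n) by omega),
              iff_false_intro (show ¬(j = i + 1 ∧ i + 1 ≤ l ∧ l ≤ n) by omega),
              iff_false_intro (show ¬(i = j) by omega),
              iff_true_intro (show i + 1 = j ∨ j + 1 = i by omega)]
          norm_num
    · by_cases hS3 : j = i + 1
      · by_cases hL1 : l = i
        · exfalso; omega
        · by_cases hL2 : l = i - 1
          · exfalso; omega
          · simp only [iff_false_intro (show ¬(j + 1 = i ∧ l = i) by omega),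
                iff_false_intro (show ¬(j = i ∧ l = i) by omega),
                iff_false_intro (show ¬((1 ≤ j + 1 ∧ j + 1 < i) ∧ l = i) by omega),
                iff_false_intro (show ¬((1 ≤ j ∧ j < i) ∧ l = i) by omega),
                iff_false_intro (show ¬((1 ≤ j + 1 ∧ j + 1 < i) ∧ l = i - 1) by omega),
                iff_false_intro (show ¬((1 ≤ j ∧ j < i) ∧ l = i - 1) by omega),
                iff_false_intro (show ¬(j + 1 = i ∧ i + 1 ≤ l ∧ l ≤ n) by omega),
                iff_false_intro (show ¬(j = i ∧ i + 1 ≤ l ∧ l ≤ n) by omega),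
                iff_false_intro (show ¬(j + 1 = i + 1 ∧ i + 1 ≤ l ∧ l ≤ n) by omega),
                iff_true_intro (show j = i + 1 ∧ i + 1 ≤ l ∧ l ≤ n by omega),
                iff_false_intro (show ¬(i = j) by omega),
                iff_true_intro (show i + 1 = j ∨ j + 1 = i by omega)]
            norm_num
      · by_cases hS4 : j < i
        · by_cases hL1 : l = i
          · simp only [iff_false_intro (show ¬(j + 1 = i ∧ l = i) by omega),
                iff_false_intro (show ¬(j = i ∧ l = i) by omega),
                iff_true_intro (show (1 ≤ j + 1 ∧ j + 1 < i) ∧ l = i by omega),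
                iff_true_intro (show (1 ≤ j ∧ j < i) ∧ l = i by omega),
                iff_false_intro (show ¬((1 ≤ j + 1 ∧ j + 1 < i) ∧ l = i - 1) by omega),
                iff_false_intro (show ¬((1 ≤ j ∧ j < i) ∧ l = i - 1) by omega),
                iff_false_intro (show ¬(j + 1 = i ∧ i + 1 ≤ l ∧ l ≤ n) by omega),
                iff_false_intro (show ¬(j = i ∧ i + 1 ≤ l ∧ l ≤ n) by omega),
                iff_false_intro (show ¬(j + 1 = i + 1 ∧ i + 1 ≤ l ∧ l ≤ n) by omega),
                iff_false_intro (show ¬(j = i + 1 ∧ i + 1 ≤ l ∧ l ≤ n) by omega),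
                iff_false_intro (show ¬(i = j) by omega),
                iff_false_intro (show ¬(i + 1 = j ∨ j + 1 = i) by omega)]
            norm_num
          · by_cases hL2 : l = i - 1
            · simp only [iff_false_intro (show ¬(j + 1 = i ∧ l = i) by omega),
                  iff_false_intro (show ¬(j = i ∧ l = i) by omega),
                  iff_false_intro (show ¬((1 ≤ j + 1 ∧ j + 1 < i) ∧ l = i) by omega),
                  iff_false_intro (show ¬((1 ≤ j ∧ j < i) ∧ l = i) by omega),
                  iff_true_intro (show (1 ≤ j + 1 ∧ j + 1 < i) ∧ l = i - 1 by omega),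
                  iff_true_intro (show (1 ≤ j ∧ j < i) ∧ l = i - 1 by omega),
                  iff_false_intro (show ¬(j + 1 = i ∧ i + 1 ≤ l ∧ l ≤ n) by omega),
                  iff_false_intro (show ¬(j = i ∧ i + 1 ≤ l ∧ l ≤ n) by omega),
                  iff_false_intro (show ¬(j + 1 = i + 1 ∧ i + 1 ≤ l ∧ l ≤ n) by omega),
                  iff_false_intro (show ¬(j = i + 1 ∧ i + 1 ≤ l ∧ l ≤ n) by omega),
                  iff_false_intro (show ¬(i = j) by omega),
                  iff_false_intro (show ¬(i + 1 = j ∨ j + 1 = i) by omega)]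
              norm_num
            · simp only [iff_false_intro (show ¬(j + 1 = i ∧ l = i) by omega),
                  iff_false_intro (show ¬(j = i ∧ l = i) by omega),
                  iff_false_intro (show ¬((1 ≤ j + 1 ∧ j + 1 < i) ∧ l = i) by omega),
                  iff_false_intro (show ¬((1 ≤ j ∧ j < i) ∧ l = i) by omega),
                  iff_false_intro (show ¬((1 ≤ j + 1 ∧ j + 1 < i) ∧ l = i - 1) by omega),
                  iff_false_intro (show ¬((1 ≤ j ∧ j < i) ∧ l = i - 1) by omega),
                  iff_false_intro (show ¬(j + 1 = i ∧ i + 1 ≤ l ∧ l ≤ n) by omega),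
                  iff_false_intro (show ¬(j = i ∧ i + 1 ≤ l ∧ l ≤ n) by omega),
                  iff_false_intro (show ¬(j + 1 = i + 1 ∧ i + 1 ≤ l ∧ l ≤ n) by omega),
                  iff_false_intro (show ¬(j = i + 1 ∧ i + 1 ≤ l ∧ l ≤ n) by omega),
                  iff_false_intro (show ¬(i = j) by omega),
                  iff_false_intro (show ¬(i + 1 = j ∨ j + 1 = i) by omega)]
              norm_num
        · by_cases hL1 : l = i
          · exfalso; omega
          · by_cases hL2 : l = i - 1
            · exfalso; omega
            · simp only [iff_false_intro (show ¬(j + 1 = i ∧ l = i) by omega),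
                  iff_false_intro (show ¬(j = i ∧ l = i) by omega),
                  iff_false_intro (show ¬((1 ≤ j + 1 ∧ j + 1 < i) ∧ l = i) by omega),
                  iff_false_intro (show ¬((1 ≤ j ∧ j < i) ∧ l = i) by omega),
                  iff_false_intro (show ¬((1 ≤ j + 1 ∧ j + 1 < i) ∧ l = i - 1) by omega),
                  iff_false_intro (show ¬((1 ≤ j ∧ j < i) ∧ l = i - 1) by omega),
                  iff_false_intro (show ¬(j + 1 = i ∧ i + 1 ≤ l ∧ l ≤ n) by omega),
                  iff_false_intro (show ¬(j = i ∧ i + 1 ≤ l ∧ l ≤ n) by omega),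
                  iff_false_intro (show ¬(j + 1 = i + 1 ∧ i + 1 ≤ l ∧ l ≤ n) by omega),
                  iff_false_intro (show ¬(j = i + 1 ∧ i + 1 ≤ l ∧ l ≤ n) by omega),
                  iff_false_intro (show ¬(i = j) by omega),
                  iff_false_intro (show ¬(i + 1 = j ∨ j + 1 = i) by omega)]
              norm_num



lemma collect {M : Type*} [AddCommGroup M] [Module ℂ M] (L s1 s2 : Finset ℕ)
    (u : ℕ → ℕ → ℂ) (v : ℕ → ℕ → ℕ → ℂ) (A : M) (B : ℕ → M) (i : ℕ) :
    (2:ℂ) • (u i i • A + ∑ l ∈ L, v i i l • B l)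
      + ∑ x ∈ s1, ((u x i • A + ∑ l ∈ L, v x i l • B l)
          - (u x (i-1) • A + ∑ l ∈ L, v x (i-1) l • B l))
      + ∑ x ∈ s2, ((u i x • A + ∑ l ∈ L, v i x l • B l)
          - (u (i+1) x • A + ∑ l ∈ L, v (i+1) x l • B l))
    = (2 * u i i + ∑ x ∈ s1, (u x i - u x (i-1)) + ∑ x ∈ s2, (u i x - u (i+1) x)) • A
      + ∑ l ∈ L, (2 * v i i l + ∑ x ∈ s1, (v x i l - v x (i-1) l)
          + ∑ x ∈ s2, (v i x l - v (i+1) x l)) • B l := by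
  simp only [add_smul, sub_smul, mul_smul, Finset.sum_smul, smul_add, smul_sub,
    Finset.sum_add_distrib, Finset.sum_sub_distrib, Finset.smul_sum]
  rw [Finset.sum_comm (s := L) (t := s1) (f := fun l x => v x i l • B l),
    Finset.sum_comm (s := L) (t := s1) (f := fun l x => v x (i-1) l • B l),
    Finset.sum_comm (s := L) (t := s2) (f := fun l x => v i x l • B l),
    Finset.sum_comm (s := L) (t := s2) (f := fun l x => v (i+1) x l • B l)]
  abel

/-- relation (R3): `[ρ(H_i)_m, ρ(F_j)_p] = −(α_i|α_j) · ρ(F_j)_{m+p}`. -/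
theorem wakimoto_R3 (n r : ℕ) (γ : ℂ) (e : ℕ → ℕ → ℂ) (lam : ℕ → ℂ)
    (hn : 1 ≤ n) (hr : r ≤ n)
    (he : ∀ i j, 1 ≤ i → i ≤ n → 1 ≤ j → j ≤ n →
      (∑ k : Fin n, e i (k.1 + 1) * e j (k.1 + 1)) = Bentry r γ i j)
    (i j : ℕ) (hi : 1 ≤ i) (hi' : i ≤ n) (hj : 1 ≤ j) (hj' : j ≤ n) (m p : ℤ) :
    opComm n (rhoH n r e lam i m) (rhoF n r j p) =
      (-(cartanEntry i j)) • rhoF n r j (m + p) := by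
  funext q
  show rhoH n r e lam i m (rhoF n r j p q) - rhoF n r j p (rhoH n r e lam i m q)
      = (-(cartanEntry i j)) • rhoF n r j (m + p) q
  have hvii : 1 ≤ i ∧ i ≤ i ∧ i ≤ n := ⟨hi, le_refl i, hi'⟩
  have e0 : rhoH n r e lam i m (rhoF n r j p q) - rhoF n r j p (rhoH n r e lam i m q)
      = (2:ℂ) • (nAAmode n r i i i i m (rhoF n r j p q)
            - rhoF n r j p (nAAmode n r i i i i m q))
        + ∑ x ∈ Finset.Ico 1 i,
            ((nAAmode n r x i x i m (rhoF n r j p q)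
                - rhoF n r j p (nAAmode n r x i x i m q))
              - (nAAmode n r x (i-1) x (i-1) m (rhoF n r j p q)
                - rhoF n r j p (nAAmode n r x (i-1) x (i-1) m q)))
        + ∑ x ∈ Finset.Icc (i+1) n,
            ((nAAmode n r i x i x m (rhoF n r j p q)
                - rhoF n r j p (nAAmode n r i x i x m q))
              - (nAAmode n r (i+1) x (i+1) x m (rhoF n r j p q)
                - rhoF n r j p (nAAmode n r (i+1) x (i+1) x m q))) := by
    have hH2 : rhoF n r j p (rhoH n r e lam i m q)
        = (2:ℂ) • rhoF n r j p (nAAmode n r i i i i m q)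
          + ∑ x ∈ Finset.Ico 1 i,
              (rhoF n r j p (nAAmode n r x i x i m q)
                - rhoF n r j p (nAAmode n r x (i-1) x (i-1) m q))
          + ∑ x ∈ Finset.Icc (i+1) n,
              (rhoF n r j p (nAAmode n r i x i x m q)
                - rhoF n r j p (nAAmode n r (i+1) x (i+1) x m q))
          + rhoF n r j p (bop n e lam i m q) := by
      rw [show rhoH n r e lam i m q
          = (2:ℂ) • nAAmode n r i i i i m q
            + ∑ x ∈ Finset.Ico 1 i,
                (nAAmode n r x i x i m q - nAAmode n r x (i-1) x (i-1) m q)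
            + ∑ x ∈ Finset.Icc (i+1) n,
                (nAAmode n r i x i x m q - nAAmode n r (i+1) x (i+1) x m q)
            + bop n e lam i m q from rfl]
      rw [rhoF_add hj hj' p, rhoF_add hj hj' p, rhoF_add hj hj' p,
        rhoF_smul hj hj' p,
        show rhoF n r j p (∑ x ∈ Finset.Ico 1 i,
            (nAAmode n r x i x i m q - nAAmode n r x (i-1) x (i-1) m q))
          = ∑ x ∈ Finset.Ico 1 i, rhoF n r j p
              (nAAmode n r x i x i m q - nAAmode n r x (i-1) x (i-1) m q) from
          map_sum (AddMonoidHom.mk' _ (rhoF_add hj hj' p)) _ _,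
        show rhoF n r j p (∑ x ∈ Finset.Icc (i+1) n,
            (nAAmode n r i x i x m q - nAAmode n r (i+1) x (i+1) x m q))
          = ∑ x ∈ Finset.Icc (i+1) n, rhoF n r j p
              (nAAmode n r i x i x m q - nAAmode n r (i+1) x (i+1) x m q) from
          map_sum (AddMonoidHom.mk' _ (rhoF_add hj hj' p)) _ _,
        Finset.sum_congr rfl (fun x _ => rhoF_sub hj hj' p
          (nAAmode n r x i x i m q) (nAAmode n r x (i-1) x (i-1) m q)),
        Finset.sum_congr rfl (fun x _ => rhoF_sub hj hj' p
          (nAAmode n r i x i x m q) (nAAmode n r (i+1) x (i+1) x m q))]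
    rw [show rhoH n r e lam i m (rhoF n r j p q)
        = (2:ℂ) • nAAmode n r i i i i m (rhoF n r j p q)
          + ∑ x ∈ Finset.Ico 1 i,
              (nAAmode n r x i x i m (rhoF n r j p q)
                - nAAmode n r x (i-1) x (i-1) m (rhoF n r j p q))
          + ∑ x ∈ Finset.Icc (i+1) n,
              (nAAmode n r i x i x m (rhoF n r j p q)
                - nAAmode n r (i+1) x (i+1) x m (rhoF n r j p q))
          + bop n e lam i m (rhoF n r j p q) from rfl,
      hH2, Mb hj hj' e lam i m p q]
    simp only [smul_sub, Finset.sum_sub_distrib]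
    abel
  rw [e0, M3 (n := n) (r := r) hvii hj hj' m p q]
  have e1 : ∑ x ∈ Finset.Ico 1 i,
      ((nAAmode n r x i x i m (rhoF n r j p q)
          - rhoF n r j p (nAAmode n r x i x i m q))
        - (nAAmode n r x (i-1) x (i-1) m (rhoF n r j p q)
          - rhoF n r j p (nAAmode n r x (i-1) x (i-1) m q)))
      = ∑ x ∈ Finset.Ico 1 i,
        (((if j = x ∧ j = i then (-1:ℂ) else 0) • aop n r j j (m + p) q
            + ∑ l ∈ Finset.Icc (j+1) n,
                (if j + 1 = x ∧ l = i then (1:ℂ) else if j = x ∧ l = i then (-1:ℂ) else 0) •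
                  ∑ᶠ s : ℤ, aop n r j l s (astarop n r (j+1) l (m + p - s) q))
          - ((if j = x ∧ j = i - 1 then (-1:ℂ) else 0) • aop n r j j (m + p) q
            + ∑ l ∈ Finset.Icc (j+1) n,
                (if j + 1 = x ∧ l = i - 1 then (1:ℂ) else if j = x ∧ l = i - 1 then (-1:ℂ) else 0) •
                  ∑ᶠ s : ℤ, aop n r j l s (astarop n r (j+1) l (m + p - s) q))) := by
    refine Finset.sum_congr rfl (fun x hx => ?_)
    rw [Finset.mem_Ico] at hx
    rw [M3 (n := n) (r := r) ⟨hx.1, by omega, hi'⟩ hj hj' m p q,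
      M3 (n := n) (r := r) ⟨hx.1, by omega, by omega⟩ hj hj' m p q]
  have e2 : ∑ x ∈ Finset.Icc (i+1) n,
      ((nAAmode n r i x i x m (rhoF n r j p q)
          - rhoF n r j p (nAAmode n r i x i x m q))
        - (nAAmode n r (i+1) x (i+1) x m (rhoF n r j p q)
          - rhoF n r j p (nAAmode n r (i+1) x (i+1) x m q)))
      = ∑ x ∈ Finset.Icc (i+1) n,
        (((if j = i ∧ j = x then (-1:ℂ) else 0) • aop n r j j (m + p) q
            + ∑ l ∈ Finset.Icc (j+1) n,
                (if j + 1 = i ∧ l = x then (1:ℂ) else if j = i ∧ l = x then (-1:ℂ) else 0) •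
                  ∑ᶠ s : ℤ, aop n r j l s (astarop n r (j+1) l (m + p - s) q))
          - ((if j = i + 1 ∧ j = x then (-1:ℂ) else 0) • aop n r j j (m + p) q
            + ∑ l ∈ Finset.Icc (j+1) n,
                (if j + 1 = i + 1 ∧ l = x then (1:ℂ) else if j = i + 1 ∧ l = x then (-1:ℂ) else 0) •
                  ∑ᶠ s : ℤ, aop n r j l s (astarop n r (j+1) l (m + p - s) q))) := by
    refine Finset.sum_congr rfl (fun x hx => ?_)
    rw [Finset.mem_Icc] at hx
    rw [M3 (n := n) (r := r) ⟨hi, by omega, hx.2⟩ hj hj' m p q,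
      M3 (n := n) (r := r) ⟨by omega, hx.1, hx.2⟩ hj hj' m p q]
  rw [e1, e2]
  have e3 := collect (Finset.Icc (j+1) n) (Finset.Ico 1 i) (Finset.Icc (i+1) n)
    (fun a b => if j = a ∧ j = b then (-1:ℂ) else 0)
    (fun a b l => if j + 1 = a ∧ l = b then (1:ℂ) else if j = a ∧ l = b then (-1:ℂ) else 0)
    (aop n r j j (m + p) q)
    (fun l => ∑ᶠ s : ℤ, aop n r j l s (astarop n r (j+1) l (m + p - s) q)) i
  rw [e3, coeffA_eval hi hi' hj hj']
  have e4 : ∑ l ∈ Finset.Icc (j+1) n,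
      (2 * (if j + 1 = i ∧ l = i then (1:ℂ) else if j = i ∧ l = i then (-1:ℂ) else 0)
        + ∑ x ∈ Finset.Ico 1 i,
            ((if j + 1 = x ∧ l = i then (1:ℂ) else if j = x ∧ l = i then (-1:ℂ) else 0)
              - (if j + 1 = x ∧ l = i - 1 then (1:ℂ) else if j = x ∧ l = i - 1 then (-1:ℂ) else 0))
        + ∑ x ∈ Finset.Icc (i+1) n,
            ((if j + 1 = i ∧ l = x then (1:ℂ) else if j = i ∧ l = x then (-1:ℂ) else 0)
              - (if j + 1 = i + 1 ∧ l = x then (1:ℂ) else if j = i + 1 ∧ l = x then (-1:ℂ) else 0))) •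
        (∑ᶠ s : ℤ, aop n r j l s (astarop n r (j+1) l (m + p - s) q))
      = ∑ l ∈ Finset.Icc (j+1) n, (-(cartanEntry i j)) •
          (∑ᶠ s : ℤ, aop n r j l s (astarop n r (j+1) l (m + p - s) q)) := by
    refine Finset.sum_congr rfl (fun l hl => ?_)
    rw [Finset.mem_Icc] at hl
    rw [coeffB_eval hi hi' hj hj' hl.1 hl.2]
  rw [e4, show rhoF n r j (m + p) q
      = aop n r j j (m + p) q + ∑ l ∈ Finset.Icc (j+1) n,
          ∑ᶠ s : ℤ, aop n r j l s (astarop n r (j+1) l (m + p - s) q) from rfl,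
    smul_add, Finset.smul_sum]
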